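/- The quotient algebra ℚ[s,t,x]/(s² − 2t, s·t, x⁴ − s·x³ + t·x²) is a 12-dimensional ℚ-vector space, with basis given by the images of the twelve elements x^j, s·x^j, t·x^j for 0 ≤ j ≤ 3. -/

import Mathlib

open MvPolynomial

/-- The ring `ℚ[s,t,x]/(s² - 2t, st, x⁴ - sx³ + tx²)`, with `s = X 0`, `t = X 1`, `x = X 2`. -/
noncomputable abbrev HopfRing : Type :=
  MvPolynomial (Fin 3) ℚ ⧸
    Ideal.span {(X 0 ^ 2 - 2 * X 1 : MvPolynomial (Fin 3) ℚ), X 0 * X 1,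
      X 2 ^ 4 - X 0 * X 2 ^ 3 + X 1 * X 2 ^ 2}

/-!
Since `s² = 2t`, the generator `t = s²/2` is redundant, and the relation `st = 0` then becomes
`s³ = 0`. Hence the ring is `ℚ[s]/(s³)` with a root `x` of the monic quartic
`x⁴ - s x³ + (s²/2) x²` adjoined. This is free of rank `4` over `ℚ[s]/(s³)`, which is free of
rank `3` over `ℚ` with basis `1, s, s²/2 = t`; the tower basis is `x^j, s x^j, t x^j`.
-/

theorem inv_two_smul_two_mul {A : Type*} [Semiring A] [Algebra ℚ A] (y : A) :
    (2⁻¹ : ℚ) • (2 * y) = y := by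
  rw [Algebra.smul_def, ← mul_assoc, ← map_ofNat (algebraMap ℚ A) 2, ← map_mul,
    inv_mul_cancel₀ two_ne_zero, map_one, one_mul]

theorem PowerBasis.basis_reindex_finCongr_apply {R S : Type*} [CommRing R] [Ring S] [Algebra R S]
    (pb : PowerBasis R S) {n : ℕ} (h : pb.dim = n) (i : Fin n) :
    pb.basis.reindex (finCongr h) i = pb.gen ^ (i : ℕ) := by
  rw [Module.Basis.reindex_apply, pb.basis_eq_pow, finCongr_symm_apply_coe]

namespace HopfRing

open AdjoinRoot

abbrev CoeffRing : Type := AdjoinRoot (Polynomial.X ^ 3 : Polynomial ℚ)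

namespace CoeffRing

noncomputable def s : CoeffRing := root _

noncomputable def t : CoeffRing := (2⁻¹ : ℚ) • s ^ 2

theorem s_pow_three : s ^ 3 = 0 := by
  rw [s, ← mk_X, ← map_pow, mk_self]

theorem s_sq : s ^ 2 = 2 * t := by
  rw [t, mul_smul_comm, inv_two_smul_two_mul]

theorem s_mul_t : s * t = 0 := by
  rw [t, mul_smul_comm, ← pow_succ', s_pow_three, smul_zero]

end CoeffRing

open CoeffRing

noncomputable def relation : Polynomial CoeffRing :=
  .X ^ 4 - .C s * .X ^ 3 + .C t * .X ^ 2

instance : Nontrivial CoeffRing :=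
  AdjoinRoot.nontrivial _ (by rw [Polynomial.degree_X_pow]; norm_num)

theorem relation_monic : relation.Monic := by
  unfold relation; monicity!

theorem relation_natDegree : relation.natDegree = 4 := by
  unfold relation; compute_degree!

abbrev Model : Type := AdjoinRoot relation

noncomputable def coeffBasis : Module.Basis (Fin 3) ℚ CoeffRing :=
  ((powerBasis' (Polynomial.monic_X_pow 3)).basis.reindex
    (finCongr (Polynomial.natDegree_X_pow 3))).unitsSMul ![1, 1, (Units.mk0 2 two_ne_zero)⁻¹]

theorem coeffBasis_apply (a : Fin 3) : coeffBasis a = ![1, s, t] a := by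
  rw [coeffBasis, Module.Basis.unitsSMul_apply,
    (powerBasis' _).basis_reindex_finCongr_apply (Polynomial.natDegree_X_pow 3)]
  fin_cases a
  · simp
  · simp [s]
  · simp [t, s, Units.smul_def]

noncomputable def basisModel : Module.Basis (Fin 3 × Fin 4) ℚ Model :=
  coeffBasis.smulTower ((powerBasis' relation_monic).basis.reindex (finCongr relation_natDegree))

theorem basisModel_apply (a : Fin 3) (j : Fin 4) :
    basisModel (a, j) = ![1, s, t] a • root relation ^ (j : ℕ) := by
  rw [basisModel, Module.Basis.smulTower_apply, coeffBasis_apply,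
    (powerBasis' _).basis_reindex_finCongr_apply relation_natDegree]
  rfl

local notation "π" => (Ideal.Quotient.mk _ : MvPolynomial (Fin 3) ℚ →+* HopfRing)

theorem mk_eq_zero_of_mem_generators {p : MvPolynomial (Fin 3) ℚ}
    (hp : p ∈ ({X 0 ^ 2 - 2 * X 1, X 0 * X 1, X 2 ^ 4 - X 0 * X 2 ^ 3 + X 1 * X 2 ^ 2} :
      Set (MvPolynomial (Fin 3) ℚ))) : π p = 0 :=
  Ideal.Quotient.eq_zero_iff_mem.mpr (Ideal.subset_span hp)

theorem mk_X0_sq : π (X 0) ^ 2 = 2 * π (X 1) := by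
  have h := mk_eq_zero_of_mem_generators (p := X 0 ^ 2 - 2 * X 1) (by simp)
  rwa [map_sub, map_pow, map_mul, map_ofNat, sub_eq_zero] at h

theorem mk_X0_mul_X1 : π (X 0) * π (X 1) = 0 := by
  have h := mk_eq_zero_of_mem_generators (p := X 0 * X 1) (by simp)
  rwa [map_mul] at h

theorem mk_X2_pow_four : π (X 2) ^ 4 - π (X 0) * π (X 2) ^ 3 + π (X 1) * π (X 2) ^ 2 = 0 := by
  have h := mk_eq_zero_of_mem_generators (p := X 2 ^ 4 - X 0 * X 2 ^ 3 + X 1 * X 2 ^ 2) (by simp)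
  rwa [map_add, map_sub, map_mul, map_mul, map_pow, map_pow, map_pow] at h

theorem mk_X0_pow_three : π (X 0) ^ 3 = 0 := by
  linear_combination π (X 0) * mk_X0_sq + 2 * mk_X0_mul_X1

noncomputable def coeffToHopf : CoeffRing →ₐ[ℚ] HopfRing :=
  liftAlgHom _ (Algebra.ofId ℚ HopfRing) (π (X 0)) (by simpa using mk_X0_pow_three)

theorem coeffToHopf_s : coeffToHopf s = π (X 0) :=
  liftAlgHom_root _ _ _ _

theorem coeffToHopf_t : coeffToHopf t = π (X 1) := by
  rw [t, map_smul, map_pow, coeffToHopf_s, mk_X0_sq, inv_two_smul_two_mul]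

noncomputable def ofModel : Model →ₐ[ℚ] HopfRing :=
  liftAlgHom _ coeffToHopf (π (X 2)) (by
    simpa [relation, coeffToHopf_s, coeffToHopf_t] using mk_X2_pow_four)

theorem root_relation : root relation ^ 4 - (s : Model) * root relation ^ 3 +
    (t : Model) * root relation ^ 2 = 0 := by
  have h : Polynomial.eval₂ (of relation) (root relation)
      (.X ^ 4 - .C s * .X ^ 3 + .C t * .X ^ 2) = 0 := eval₂_root relation
  simp only [Polynomial.eval₂_add, Polynomial.eval₂_sub, Polynomial.eval₂_mul,
    Polynomial.eval₂_pow, Polynomial.eval₂_X, Polynomial.eval₂_C] at h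
  exact h

noncomputable def toModel : HopfRing →ₐ[ℚ] Model :=
  Ideal.Quotient.liftₐ _ (aeval ![(s : Model), (t : Model), root relation]) (by
    suffices h : Ideal.span _ ≤ RingHom.ker (aeval ![(s : Model), (t : Model), root relation]) from
      fun a ha => h ha
    rw [Ideal.span_le]
    rintro p (rfl | rfl | rfl | ⟨⟩) <;>
      simp only [SetLike.mem_coe, RingHom.mem_ker, map_add, map_sub, map_mul, map_pow, map_ofNat,
        aeval_X]
    · simp [← map_pow, s_sq, ← map_ofNat (of relation) 2]
    · simp [← map_mul, s_mul_t]
    · exact root_relation)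

theorem toModel_mk (p : MvPolynomial (Fin 3) ℚ) :
    toModel (π p) = aeval ![(s : Model), (t : Model), root relation] p :=
  rfl

theorem ofModel_comp_toModel : ofModel.comp toModel = AlgHom.id ℚ HopfRing := by
  refine Ideal.Quotient.algHom_ext ℚ (MvPolynomial.algHom_ext fun i => ?_)
  fin_cases i
  · simp [toModel_mk, ofModel, coeffToHopf_s]
  · simp [toModel_mk, ofModel, coeffToHopf_t]
  · simp [toModel_mk, ofModel]

theorem toModel_comp_ofModel : toModel.comp ofModel = AlgHom.id ℚ Model := by
  refine algHom_ext' (algHom_ext ?_) ?_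
  · have h : toModel (coeffToHopf s) = of relation s := by simp [coeffToHopf_s, toModel_mk]
    simp only [AlgHom.comp_apply, AlgHom.id_apply, ofModel, coe_ofAlgHom, liftAlgHom_of]
    exact h
  · simp [ofModel, toModel_mk]

noncomputable def equivModel : HopfRing ≃ₐ[ℚ] Model :=
  .ofAlgHom toModel ofModel toModel_comp_ofModel ofModel_comp_toModel

theorem toModel_mk_monomial (i : Fin 3) (j : Fin 4) :
    toModel (π (![1, X 0, X 1] i * X 2 ^ (j : ℕ))) = basisModel (i, j) := by
  rw [basisModel_apply, toModel_mk, Algebra.smul_def]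
  fin_cases i <;> simp

end HopfRing

/-- The quotient `ℚ[s,t,x]/(s² - 2t, st, x⁴ - sx³ + tx²)` is a
`12`-dimensional `ℚ`-vector space, with basis the images of the twelve elements
`x^j, s·x^j, t·x^j` for `0 ≤ j ≤ 3`. -/
theorem hopfRing_dimension :
    Module.finrank ℚ HopfRing = 12 ∧
    ∃ b : Module.Basis (Fin 3 × Fin 4) ℚ HopfRing,
      ∀ (i : Fin 3) (j : Fin 4),
        b (i, j) = Ideal.Quotient.mk _
          ((![1, X 0, X 1] i : MvPolynomial (Fin 3) ℚ) * X 2 ^ (j : ℕ)) := by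
  let b := HopfRing.basisModel.map HopfRing.equivModel.symm.toLinearEquiv
  have hb : ∀ i j, b (i, j) = Ideal.Quotient.mk _ (![1, X 0, X 1] i * X 2 ^ (j : ℕ)) := by
    intro i j
    rw [Module.Basis.map_apply, ← HopfRing.toModel_mk_monomial]
    exact AlgHom.congr_fun HopfRing.ofModel_comp_toModel _
  exact ⟨by simp [Module.finrank_eq_card_basis b], b, hb⟩
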